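/- Monotonicity of equilibrium protection in K: fix the population size vector m and β_IA ∈ (0,1]. If K₁ ≤ K₂ are positive integers and x¹, x² are Nash equilibria of the population games with propagation parameters K₁, K₂ respectively, then Σ_{d ∈ 𝒟} x¹_{d,P} ≤ Σ_{d ∈ 𝒟} x²_{d,P}. -/

import Mathlib

open Finset

/-- The three actions: Protection, No action, Insurance. -/
inductive Act | P | N | I
deriving DecidableEq

/-- `𝒟 = {1, …, D_max}`. -/
def Dset (Dmax : ℕ) : Finset ℕ := Finset.Icc 1 Dmax

/-- Weighted degree distribution `w_d = d·m_d / ∑ d'·m_{d'}`. -/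
noncomputable def wgt (Dmax : ℕ) (m : ℕ → ℝ) (d : ℕ) : ℝ :=
  (d : ℝ) * m d / ∑ d' ∈ Dset Dmax, (d' : ℝ) * m d'

/-- `γ(x) = β_IA · ∑_d w_d (g_{d,P} p_P + (1 − g_{d,P}) p_U)`, where
`g_{d,P} = x_{d,P}/m_d`. -/
noncomputable def gam (Dmax : ℕ) (m : ℕ → ℝ) (pP pU βIA : ℝ) (xP : ℕ → ℝ) : ℝ :=
  βIA * ∑ d ∈ Dset Dmax, wgt Dmax m d * ((xP d / m d) * pP + (1 - xP d / m d) * pU)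

/-- `λ(x) = β_IA · ∑_d w_d (d−1) (g_{d,P} p_P + (1 − g_{d,P}) p_U)`. -/
noncomputable def lamb (Dmax : ℕ) (m : ℕ → ℝ) (pP pU βIA : ℝ) (xP : ℕ → ℝ) : ℝ :=
  βIA * ∑ d ∈ Dset Dmax,
    wgt Dmax m d * ((d : ℝ) - 1) * ((xP d / m d) * pP + (1 - xP d / m d) * pU)

/-- Risk exposure `e(x) = γ(x) · ∑_{k=1}^{K} λ(x)^{k−1}`. -/
noncomputable def expo (Dmax : ℕ) (m : ℕ → ℝ) (pP pU βIA : ℝ) (K : ℕ)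
    (xP : ℕ → ℝ) : ℝ :=
  gam Dmax m pP pU βIA xP * ∑ k ∈ Finset.range K, lamb Dmax m pP pU βIA xP ^ k

/-- Cost of a degree-`d` node playing action `a` at a social state with protected
masses `xP`:  `C_{d,P} = τ(1 + d·e)L_P + c_P`, `C_{d,N} = τ(1 + d·e)L_U`,
`C_{d,I} = C_{d,N} + c_I − min(Cov_max, ξ·max(0, C_{d,N} − ded))`. -/
noncomputable def cost (Dmax : ℕ) (m : ℕ → ℝ) (pP pU βIA τ LP LU cP cI ξ ded Cov : ℝ)
    (K : ℕ) (xP : ℕ → ℝ) (d : ℕ) : Act → ℝ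
  | Act.P => τ * (1 + (d : ℝ) * expo Dmax m pP pU βIA K xP) * LP + cP
  | Act.N => τ * (1 + (d : ℝ) * expo Dmax m pP pU βIA K xP) * LU
  | Act.I => τ * (1 + (d : ℝ) * expo Dmax m pP pU βIA K xP) * LU + cI
      - min Cov (ξ * max 0 (τ * (1 + (d : ℝ) * expo Dmax m pP pU βIA K xP) * LU - ded))

/-- Admissible social state: nonnegative masses summing to `m_d` within each population. -/
def isState (Dmax : ℕ) (m : ℕ → ℝ) (x : ℕ → Act → ℝ) : Prop :=
  ∀ d ∈ Dset Dmax, (∀ a : Act, 0 ≤ x d a) ∧ x d Act.P + x d Act.N + x d Act.I = m d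

/-- Nash equilibrium: any action played by a positive mass of population `d`
minimizes the cost for population `d`. -/
def isNE (Dmax : ℕ) (m : ℕ → ℝ) (pP pU βIA τ LP LU cP cI ξ ded Cov : ℝ)
    (K : ℕ) (x : ℕ → Act → ℝ) : Prop :=
  isState Dmax m x ∧
    ∀ d ∈ Dset Dmax, ∀ a : Act, 0 < x d a →
      ∀ a' : Act, cost Dmax m pP pU βIA τ LP LU cP cI ξ ded Cov K (fun d' => x d' Act.P) d a
        ≤ cost Dmax m pP pU βIA τ LP LU cP cI ξ ded Cov K (fun d' => x d' Act.P) d a'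

/-!
Protecting beats the cheaper alternative by `protGain (d·e)`, which is strictly increasing in
the effective exposure `d·e`, while the exposure `e` decreases with the protected masses and
increases with `K`. If `x¹` protected more in total than `x²`, some degree `d₀` would have
`x²_{d₀,P} < x¹_{d₀,P}`; then protection is weakly attractive for `d₀` at `x¹` and weakly
unattractive at `x²`, so `e₂ ≤ e₁`. Every other degree protected at `x²` must then lie above
`d₀` and is therefore fully protected at `x¹`. Hence `x² ≤ x¹` pointwise, strictly at `d₀`,
which forces `e₁ < e₂`.
-/

lemma geom_sum_le_geom_sum {R : Type*} [Semiring R] [PartialOrder R] [IsOrderedRing R]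
    {a b : R} (ha : 0 ≤ a) (hab : a ≤ b) {n₁ n₂ : ℕ} (hn : n₁ ≤ n₂) :
    ∑ k ∈ range n₁, a ^ k ≤ ∑ k ∈ range n₂, b ^ k :=
  calc ∑ k ∈ range n₁, a ^ k ≤ ∑ k ∈ range n₁, b ^ k := by gcongr
    _ ≤ ∑ k ∈ range n₂, b ^ k :=
      sum_le_sum_of_subset_of_nonneg (range_subset_range.2 hn) fun k _ _ =>
        pow_nonneg (ha.trans hab) k

lemma min_mul_max_sub_le {ξ : ℝ} (hξ : 0 ≤ ξ) (C t : ℝ) {v w : ℝ} (h : v ≤ w) :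
    min C (ξ * max 0 (w - t)) - min C (ξ * max 0 (v - t)) ≤ ξ * (w - v) := by
  have hmin := abs_min_sub_min_le_max C (ξ * max 0 (w - t)) C (ξ * max 0 (v - t))
  have hmax := abs_max_sub_max_le_abs (w - t) (v - t) 0
  rw [sub_self, abs_zero, ← mul_sub, abs_mul, abs_of_nonneg hξ,
    max_eq_right (mul_nonneg hξ (abs_nonneg (max 0 (w - t) - max 0 (v - t))))] at hmin
  rw [sub_sub_sub_cancel_right, abs_of_nonneg (sub_nonneg.2 h), max_comm, max_comm (v - t)] at hmax
  exact (le_abs_self _).trans (hmin.trans (mul_le_mul_of_nonneg_left hmax hξ))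

section Exposure

variable {Dmax : ℕ} {m : ℕ → ℝ} {pP pU βIA : ℝ} {xP xQ : ℕ → ℝ}

lemma one_le_of_mem_Dset {d : ℕ} (hd : d ∈ Dset Dmax) : (1 : ℝ) ≤ d := by
  exact_mod_cast (mem_Icc.1 hd).1

lemma wgt_pos (hm : ∀ d ∈ Dset Dmax, 0 < m d) {d : ℕ} (hd : d ∈ Dset Dmax) :
    0 < wgt Dmax m d := by
  have hdm : ∀ d ∈ Dset Dmax, 0 < (d : ℝ) * m d := fun d hd =>
    mul_pos (one_pos.trans_le (one_le_of_mem_Dset hd)) (hm d hd)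
  exact div_pos (hdm d hd) (sum_pos hdm ⟨d, hd⟩)

lemma gam_eq (xP : ℕ → ℝ) :
    gam Dmax m pP pU βIA xP =
      βIA * ∑ d ∈ Dset Dmax, wgt Dmax m d * (pU - xP d / m d * (pU - pP)) := by
  simp only [gam]
  congr 1
  exact sum_congr rfl fun d _ => by ring

lemma lamb_eq (xP : ℕ → ℝ) :
    lamb Dmax m pP pU βIA xP =
      βIA * ∑ d ∈ Dset Dmax, wgt Dmax m d * ((d : ℝ) - 1) * (pU - xP d / m d * (pU - pP)) := by
  simp only [lamb]
  congr 1
  exact sum_congr rfl fun d _ => by ring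

lemma gam_lt_gam (hm : ∀ d ∈ Dset Dmax, 0 < m d) (hp : pP < pU) (hβ : 0 < βIA)
    (hle : ∀ d ∈ Dset Dmax, xQ d ≤ xP d) {d₀ : ℕ} (hd₀ : d₀ ∈ Dset Dmax) (hlt : xQ d₀ < xP d₀) :
    gam Dmax m pP pU βIA xP < gam Dmax m pP pU βIA xQ := by
  rw [gam_eq, gam_eq]
  refine mul_lt_mul_of_pos_left (sum_lt_sum (fun d hd => ?_) ⟨d₀, hd₀, ?_⟩) hβ
  · gcongr
    exacts [(wgt_pos hm hd).le, (hm d hd).le, hle d hd]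
  · gcongr
    exacts [wgt_pos hm hd₀, hm d₀ hd₀]

lemma lamb_le_lamb (hm : ∀ d ∈ Dset Dmax, 0 < m d) (hp : pP ≤ pU) (hβ : 0 ≤ βIA)
    (hle : ∀ d ∈ Dset Dmax, xQ d ≤ xP d) :
    lamb Dmax m pP pU βIA xP ≤ lamb Dmax m pP pU βIA xQ := by
  rw [lamb_eq, lamb_eq]
  gcongr with d hd
  exacts [mul_nonneg (wgt_pos hm hd).le (sub_nonneg.2 (one_le_of_mem_Dset hd)), (hm d hd).le,
    hle d hd]

lemma gam_nonneg (hm : ∀ d ∈ Dset Dmax, 0 < m d) (hpP : 0 ≤ pP) (hp : pP ≤ pU) (hβ : 0 ≤ βIA)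
    (hx : ∀ d ∈ Dset Dmax, xP d ≤ m d) : 0 ≤ gam Dmax m pP pU βIA xP := by
  rw [gam_eq]
  refine mul_nonneg hβ (sum_nonneg fun d hd => mul_nonneg (wgt_pos hm hd).le ?_)
  have : xP d / m d ≤ 1 := (div_le_one (hm d hd)).2 (hx d hd)
  nlinarith

lemma lamb_nonneg (hm : ∀ d ∈ Dset Dmax, 0 < m d) (hpP : 0 ≤ pP) (hp : pP ≤ pU) (hβ : 0 ≤ βIA)
    (hx : ∀ d ∈ Dset Dmax, xP d ≤ m d) : 0 ≤ lamb Dmax m pP pU βIA xP := by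
  rw [lamb_eq]
  refine mul_nonneg hβ (sum_nonneg fun d hd => mul_nonneg
    (mul_nonneg (wgt_pos hm hd).le (sub_nonneg.2 (one_le_of_mem_Dset hd))) ?_)
  have : xP d / m d ≤ 1 := (div_le_one (hm d hd)).2 (hx d hd)
  nlinarith

lemma expo_lt_expo (hm : ∀ d ∈ Dset Dmax, 0 < m d) (hpP : 0 ≤ pP) (hp : pP < pU)
    (hβ : 0 < βIA) (hx : ∀ d ∈ Dset Dmax, xP d ≤ m d) (hle : ∀ d ∈ Dset Dmax, xQ d ≤ xP d)
    {d₀ : ℕ} (hd₀ : d₀ ∈ Dset Dmax) (hlt : xQ d₀ < xP d₀) {K₁ K₂ : ℕ} (hK : K₁ ≤ K₂)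
    (hK₂ : K₂ ≠ 0) :
    expo Dmax m pP pU βIA K₁ xP < expo Dmax m pP pU βIA K₂ xQ := by
  have hy : ∀ d ∈ Dset Dmax, xQ d ≤ m d := fun d hd => (hle d hd).trans (hx d hd)
  calc expo Dmax m pP pU βIA K₁ xP
      ≤ gam Dmax m pP pU βIA xP * ∑ k ∈ range K₂, lamb Dmax m pP pU βIA xQ ^ k :=
        mul_le_mul_of_nonneg_left
          (geom_sum_le_geom_sum (lamb_nonneg hm hpP hp.le hβ.le hx)
            (lamb_le_lamb hm hp.le hβ.le hle) hK)
          (gam_nonneg hm hpP hp.le hβ.le hx)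
    _ < expo Dmax m pP pU βIA K₂ xQ :=
        mul_lt_mul_of_pos_right (gam_lt_gam hm hp hβ hle hd₀ hlt)
          (geom_sum_pos (lamb_nonneg hm hpP hp.le hβ.le hy) hK₂)

lemma expo_pos (hm : ∀ d ∈ Dset Dmax, 0 < m d) (hpP : 0 ≤ pP) (hp : pP < pU) (hβ : 0 < βIA)
    (hx : ∀ d ∈ Dset Dmax, xP d ≤ m d) {d₀ : ℕ} (hd₀ : d₀ ∈ Dset Dmax) (hlt : xP d₀ < m d₀)
    {K : ℕ} (hK : K ≠ 0) : 0 < expo Dmax m pP pU βIA K xP :=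
  mul_pos ((gam_nonneg hm hpP hp.le hβ.le fun _ _ => le_rfl).trans_lt
      (gam_lt_gam hm hp hβ hx hd₀ hlt))
    (geom_sum_pos (lamb_nonneg hm hpP hp.le hβ.le hx) hK)

end Exposure

/-- `min (C_N, C_I) − C_P` as a function of the effective exposure `u = d·e`. -/
noncomputable def protGain (τ LP LU cP cI ξ ded Cov u : ℝ) : ℝ :=
  min (τ * (1 + u) * LU)
      (τ * (1 + u) * LU + cI - min Cov (ξ * max 0 (τ * (1 + u) * LU - ded)))
    - (τ * (1 + u) * LP + cP)

lemma strictMono_protGain (cP cI ded Cov : ℝ) {τ LP LU ξ : ℝ} (hτ : 0 < τ) (hLU : 0 < LU)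
    (hξ : 0 ≤ ξ) (hL : LP < (1 - ξ) * LU) :
    StrictMono (protGain τ LP LU cP cI ξ ded Cov) := by
  intro u v huv
  have hvu : 0 < τ * (v - u) := mul_pos hτ (sub_pos.2 huv)
  have hloss : τ * (1 + u) * LU ≤ τ * (1 + v) * LU := by nlinarith
  have hcov := min_mul_max_sub_le hξ Cov ded hloss
  simp only [protGain, ← min_sub_sub_right, lt_min_iff, min_lt_iff]
  constructor
  · left; nlinarith [mul_pos hvu (show 0 < LU - LP by nlinarith)]
  · right; nlinarith [mul_pos hvu (sub_pos.2 hL)]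

section Equilibrium

variable {Dmax : ℕ} {m : ℕ → ℝ} {pP pU βIA τ LP LU cP cI ξ ded Cov : ℝ} {K : ℕ}
  {x : ℕ → Act → ℝ} {d : ℕ}

lemma protGain_eq_cost (xP : ℕ → ℝ) (d : ℕ) :
    protGain τ LP LU cP cI ξ ded Cov (d * expo Dmax m pP pU βIA K xP) =
      min (cost Dmax m pP pU βIA τ LP LU cP cI ξ ded Cov K xP d Act.N)
        (cost Dmax m pP pU βIA τ LP LU cP cI ξ ded Cov K xP d Act.I)
        - cost Dmax m pP pU βIA τ LP LU cP cI ξ ded Cov K xP d Act.P :=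
  rfl

lemma isState.P_nonneg (hx : isState Dmax m x) (hd : d ∈ Dset Dmax) : 0 ≤ x d Act.P :=
  (hx d hd).1 Act.P

lemma isState.P_le (hx : isState Dmax m x) (hd : d ∈ Dset Dmax) : x d Act.P ≤ m d := by
  obtain ⟨hnonneg, hsum⟩ := hx d hd
  linarith [hnonneg Act.N, hnonneg Act.I]

lemma isNE.protGain_nonneg (hx : isNE Dmax m pP pU βIA τ LP LU cP cI ξ ded Cov K x)
    (hd : d ∈ Dset Dmax) (hP : 0 < x d Act.P) :
    0 ≤ protGain τ LP LU cP cI ξ ded Cov (d * expo Dmax m pP pU βIA K fun d' => x d' Act.P) := by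
  rw [protGain_eq_cost, sub_nonneg]
  exact le_min (hx.2 d hd _ hP Act.N) (hx.2 d hd _ hP Act.I)

lemma isNE.protGain_nonpos (hx : isNE Dmax m pP pU βIA τ LP LU cP cI ξ ded Cov K x)
    (hd : d ∈ Dset Dmax) (hP : x d Act.P < m d) :
    protGain τ LP LU cP cI ξ ded Cov (d * expo Dmax m pP pU βIA K fun d' => x d' Act.P) ≤ 0 := by
  obtain ⟨hnonneg, hsum⟩ := hx.1 d hd
  rw [protGain_eq_cost, sub_nonpos]
  rcases (hnonneg Act.N).lt_or_eq with hN | hN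
  · exact (min_le_left _ _).trans (hx.2 d hd _ hN Act.P)
  · have hI : 0 < x d Act.I := by linarith
    exact (min_le_right _ _).trans (hx.2 d hd _ hI Act.P)

lemma isNE.P_eq_of_protGain_pos (hx : isNE Dmax m pP pU βIA τ LP LU cP cI ξ ded Cov K x)
    (hd : d ∈ Dset Dmax) (hgain : 0 < protGain τ LP LU cP cI ξ ded Cov
      (d * expo Dmax m pP pU βIA K fun d' => x d' Act.P)) :
    x d Act.P = m d := by
  obtain ⟨hnonneg, hsum⟩ := hx.1 d hd
  rw [protGain_eq_cost, sub_pos, lt_min_iff] at hgain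
  have hN : x d Act.N = 0 :=
    ((hnonneg Act.N).eq_of_not_lt fun hN => not_lt_of_ge (hx.2 d hd _ hN Act.P) hgain.1).symm
  have hI : x d Act.I = 0 :=
    ((hnonneg Act.I).eq_of_not_lt fun hI => not_lt_of_ge (hx.2 d hd _ hI Act.P) hgain.2).symm
  linarith

lemma isNE.P_le_of_ne_pivot {K₁ K₂ : ℕ} {x₁ x₂ : ℕ → Act → ℝ}
    (hNE₂ : isNE Dmax m pP pU βIA τ LP LU cP cI ξ ded Cov K₂ x₂)
    (hNE₁ : isNE Dmax m pP pU βIA τ LP LU cP cI ξ ded Cov K₁ x₁)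
    (hmono : StrictMono (protGain τ LP LU cP cI ξ ded Cov))
    (he₁ : 0 < expo Dmax m pP pU βIA K₁ fun d => x₁ d Act.P)
    (he₂ : 0 < expo Dmax m pP pU βIA K₂ fun d => x₂ d Act.P) {d₀ : ℕ}
    (hgain₁ : 0 ≤ protGain τ LP LU cP cI ξ ded Cov
      (d₀ * expo Dmax m pP pU βIA K₁ fun d => x₁ d Act.P))
    (hgain₂ : protGain τ LP LU cP cI ξ ded Cov
      (d₀ * expo Dmax m pP pU βIA K₂ fun d => x₂ d Act.P) ≤ 0)
    (hd : d ∈ Dset Dmax) (hne : d ≠ d₀) : x₂ d Act.P ≤ x₁ d Act.P := by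
  rcases (hNE₂.1.P_nonneg hd).eq_or_lt with h0 | hpos
  · exact h0 ▸ hNE₁.1.P_nonneg hd
  have hle : (d₀ : ℝ) ≤ d := le_of_mul_le_mul_right
    (hmono.le_iff_le.1 (hgain₂.trans (hNE₂.protGain_nonneg hd hpos))) he₂
  have hlt : (d₀ : ℝ) < d := hle.lt_of_ne (by exact_mod_cast hne.symm)
  rw [hNE₁.P_eq_of_protGain_pos hd (hgain₁.trans_lt (hmono (mul_lt_mul_of_pos_right hlt he₁)))]
  exact hNE₂.1.P_le hd

end Equilibrium

theorem NE_protection_mono_in_K_general (Dmax : ℕ)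
    (m : ℕ → ℝ) (hm : ∀ d ∈ Dset Dmax, 0 < m d)
    (pP pU βIA τ LP LU cP cI ξ ded Cov : ℝ)
    (hpP : 0 ≤ pP) (hp : pP < pU)
    (hβ0 : 0 < βIA)
    (hτ0 : 0 < τ)
    (hLP : 0 < LP) (hL : LP < (1 - ξ) * LU)
    (hξ0 : 0 < ξ) (hξ1 : ξ ≤ 1)
    (K₁ K₂ : ℕ) (hK₁ : 1 ≤ K₁) (hK : K₁ ≤ K₂)
    (x₁ x₂ : ℕ → Act → ℝ)
    (hNE₁ : isNE Dmax m pP pU βIA τ LP LU cP cI ξ ded Cov K₁ x₁)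
    (hNE₂ : isNE Dmax m pP pU βIA τ LP LU cP cI ξ ded Cov K₂ x₂) :
    ∑ d ∈ Dset Dmax, x₁ d Act.P ≤ ∑ d ∈ Dset Dmax, x₂ d Act.P := by
  by_contra! hsum
  obtain ⟨d₀, hd₀, hlt⟩ := exists_lt_of_sum_lt hsum
  have hLU : 0 < LU := by nlinarith
  have hmono := strictMono_protGain cP cI ded Cov hτ0 hLU hξ0.le hL
  have hK₂ : K₂ ≠ 0 := by omega
  have hlt₂ : x₂ d₀ Act.P < m d₀ := hlt.trans_le (hNE₁.1.P_le hd₀)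
  have hgain₁ := hNE₁.protGain_nonneg hd₀ ((hNE₂.1.P_nonneg hd₀).trans_lt hlt)
  have hgain₂ := hNE₂.protGain_nonpos hd₀ hlt₂
  have he₂ := expo_pos hm hpP hp hβ0 (fun d hd => hNE₂.1.P_le hd) hd₀ hlt₂ hK₂
  have he : expo Dmax m pP pU βIA K₂ (fun d => x₂ d Act.P) ≤
      expo Dmax m pP pU βIA K₁ (fun d => x₁ d Act.P) :=
    le_of_mul_le_mul_left (hmono.le_iff_le.1 (hgain₂.trans hgain₁))
      (one_pos.trans_le (one_le_of_mem_Dset hd₀))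
  have hle : ∀ d ∈ Dset Dmax, x₂ d Act.P ≤ x₁ d Act.P := fun d hd =>
    (eq_or_ne d d₀).elim (fun h => h ▸ hlt.le)
      (hNE₂.P_le_of_ne_pivot hNE₁ hmono (he₂.trans_le he) he₂ hgain₁ hgain₂ hd)
  exact (expo_lt_expo hm hpP hp hβ0 (fun d hd => hNE₁.1.P_le hd) hle hd₀ hlt hK hK₂).not_ge he

/-- monotonicity of equilibrium protection in the propagation
parameter `K`: if `K₁ ≤ K₂` and `x¹`, `x²` are Nash equilibria of the games with
parameters `K₁`, `K₂` respectively, then the total protected mass at `x¹` is at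
most that at `x²`. -/
theorem NE_protection_mono_in_K (Dmax : ℕ) (hD : 1 ≤ Dmax)
    (m : ℕ → ℝ) (hm : ∀ d ∈ Dset Dmax, 0 < m d)
    (pP pU βIA τ LP LU cP cI ξ ded Cov : ℝ)
    (hpP : 0 ≤ pP) (hp : pP < pU) (hpU : pU ≤ 1)
    (hβ0 : 0 < βIA) (hβ1 : βIA ≤ 1)
    (hτ0 : 0 < τ) (hτ1 : τ ≤ 1)
    (hLP : 0 < LP) (hL : LP < (1 - ξ) * LU)
    (hξ0 : 0 < ξ) (hξ1 : ξ ≤ 1) (hCov : 0 ≤ Cov) (hded : 0 ≤ ded)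
    (hc : cI + ded < cP)
    (K₁ K₂ : ℕ) (hK₁ : 1 ≤ K₁) (hK : K₁ ≤ K₂)
    (x₁ x₂ : ℕ → Act → ℝ)
    (hNE₁ : isNE Dmax m pP pU βIA τ LP LU cP cI ξ ded Cov K₁ x₁)
    (hNE₂ : isNE Dmax m pP pU βIA τ LP LU cP cI ξ ded Cov K₂ x₂) :
    ∑ d ∈ Dset Dmax, x₁ d Act.P ≤ ∑ d ∈ Dset Dmax, x₂ d Act.P :=
  NE_protection_mono_in_K_general Dmax m hm pP pU βIA τ LP LU cP cI ξ ded Cov hpP hp hβ0 hτ0 hLP hL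
    hξ0 hξ1 K₁ K₂ hK₁ hK x₁ x₂ hNE₁ hNE₂
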